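/- arXiv:2408.10136 — 3 statements merged into one kernel-verified Lean document; each statement's English description precedes it below -/
import Mathlib

section
/- Let (a,b,c,d) be obtained by uniformly sampling four distinct values without replacement from the set {i/(N+1) - 1/2 : i = 1,...,N} with N >= 4. Then E[abcd] = (3 N^2 (E[a^2])^2 - 6 N E[a^4]) / (N(N-1)(N-2)(N-3)). -/
open Finset

/-- The `i`-th element of the set `{i/(N+1) - 1/2 : i = 1, ..., N}` of shifted
normalized rank values. -/
noncomputable def shiftedRankVal (N : ℕ) (i : Fin N) : ℝ :=
  ((i : ℕ) + 1) / (N + 1) - 1 / 2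

/-!
The values are symmetric about `0` (`i ↦ N - 1 - i` negates them), so they sum to zero.
For a zero-sum family, sum the product over distinct quadruples one index at a time: each
inner sum is the full sum, zero, minus the terms at the indices already chosen, so every
level is a polynomial in the chosen values, and summing it out leaves `3 p₂² - 6 p₄` in the
power sums `pₖ = ∑ fᵢᵏ`.
-/

section DistinctQuadruples

variable {ι R : Type*} [Fintype ι] [DecidableEq ι] [CommRing R] {f : ι → R}

theorem sum_erase_erase_erase_mul (hf : ∑ i, f i = 0) {i j k : ι} (hji : j ≠ i)
    (hk : k ∈ (univ.erase i).erase j) :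
    ∑ l ∈ ((univ.erase i).erase j).erase k, f i * f j * f k * f l
      = -(f i * f j * f k) * (f i + f j + f k) := by
  rw [← mul_sum, sum_erase_eq_sub hk, sum_erase_eq_sub (mem_erase.mpr ⟨hji, mem_univ j⟩),
    sum_erase_eq_sub (mem_univ i), hf]
  ring

theorem sum_erase_erase_mul (hf : ∑ i, f i = 0) {i j : ι} (hji : j ≠ i) :
    ∑ k ∈ (univ.erase i).erase j, ∑ l ∈ ((univ.erase i).erase j).erase k,
        f i * f j * f k * f l
      = 2 * f i ^ 3 * f j + 2 * f i * f j ^ 3 + 2 * f i ^ 2 * f j ^ 2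
          - (∑ m, f m ^ 2) * (f i * f j) := by
  have hj : j ∈ univ.erase i := mem_erase.mpr ⟨hji, mem_univ j⟩
  have hexpand : ∀ k ∈ (univ.erase i).erase j,
      -(f i * f j * f k) * (f i + f j + f k)
        = -(f i * f j * (f i + f j)) * f k - f i * f j * f k ^ 2 := fun _ _ => by ring
  rw [sum_congr rfl fun k hk => sum_erase_erase_erase_mul hf hji hk, sum_congr rfl hexpand,
    sum_sub_distrib, ← mul_sum, ← mul_sum, sum_erase_eq_sub hj, sum_erase_eq_sub hj,
    sum_erase_eq_sub (mem_univ i), sum_erase_eq_sub (mem_univ i), hf]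
  ring

theorem sum_erase_mul (hf : ∑ i, f i = 0) (i : ι) :
    ∑ j ∈ univ.erase i, ∑ k ∈ (univ.erase i).erase j, ∑ l ∈ ((univ.erase i).erase j).erase k,
        f i * f j * f k * f l
      = -6 * f i ^ 4 + 3 * (∑ m, f m ^ 2) * f i ^ 2 + 2 * (∑ m, f m ^ 3) * f i := by
  have hexpand : ∀ j ∈ univ.erase i,
      2 * f i ^ 3 * f j + 2 * f i * f j ^ 3 + 2 * f i ^ 2 * f j ^ 2
          - (∑ m, f m ^ 2) * (f i * f j)
        = (2 * f i ^ 3 - (∑ m, f m ^ 2) * f i) * f j + 2 * f i ^ 2 * f j ^ 2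
            + 2 * f i * f j ^ 3 := fun _ _ => by ring
  rw [sum_congr rfl fun j hj => sum_erase_erase_mul hf (ne_of_mem_erase hj),
    sum_congr rfl hexpand, sum_add_distrib, sum_add_distrib, ← mul_sum, ← mul_sum, ← mul_sum,
    sum_erase_eq_sub (mem_univ i), sum_erase_eq_sub (mem_univ i),
    sum_erase_eq_sub (mem_univ i), hf]
  ring

theorem sum_distinct_four_mul_of_sum_eq_zero (hf : ∑ i, f i = 0) :
    ∑ i, ∑ j ∈ univ.erase i, ∑ k ∈ (univ.erase i).erase j,
        ∑ l ∈ ((univ.erase i).erase j).erase k, f i * f j * f k * f l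
      = 3 * (∑ i, f i ^ 2) ^ 2 - 6 * ∑ i, f i ^ 4 := by
  rw [sum_congr rfl fun i _ => sum_erase_mul hf i, sum_add_distrib, sum_add_distrib,
    ← mul_sum, ← mul_sum, ← mul_sum, hf]
  ring

end DistinctQuadruples

theorem shiftedRankVal_rev (N : ℕ) (i : Fin N) :
    shiftedRankVal N i.rev = -shiftedRankVal N i := by
  have hi : (i : ℕ) < N := i.isLt
  simp only [shiftedRankVal, Fin.val_rev]
  rw [Nat.cast_sub (by omega)]
  push_cast
  field_simp
  ring

theorem sum_shiftedRankVal (N : ℕ) : ∑ i : Fin N, shiftedRankVal N i = 0 := by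
  have hrev := Equiv.sum_comp Fin.revPerm (shiftedRankVal N)
  simp only [Fin.revPerm_apply, shiftedRankVal_rev, sum_neg_distrib] at hrev
  linarith

theorem stmt_10_general (N : ℕ) :
    (∑ i : Fin N, ∑ j ∈ univ.erase i, ∑ k ∈ (univ.erase i).erase j,
        ∑ l ∈ ((univ.erase i).erase j).erase k,
          shiftedRankVal N i * shiftedRankVal N j * shiftedRankVal N k * shiftedRankVal N l)
        / ((N : ℝ) * ((N : ℝ) - 1) * ((N : ℝ) - 2) * ((N : ℝ) - 3))
      = (3 * (N : ℝ) ^ 2 * ((∑ i : Fin N, shiftedRankVal N i ^ 2) / N) ^ 2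
          - 6 * (N : ℝ) * ((∑ i : Fin N, shiftedRankVal N i ^ 4) / N))
        / ((N : ℝ) * ((N : ℝ) - 1) * ((N : ℝ) - 2) * ((N : ℝ) - 3)) := by
  rw [sum_distinct_four_mul_of_sum_eq_zero (sum_shiftedRankVal N)]
  rcases N.eq_zero_or_pos with rfl | hpos
  · simp
  · field_simp

/-- If `(a,b,c,d)` is a uniformly random sequence of four distinct elements of
`{i/(N+1) - 1/2 : i = 1,...,N}` with `N ≥ 4`, then
`E[abcd] = (3N²(E[a²])² - 6N E[a⁴]) / (N(N-1)(N-2)(N-3))`. -/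
theorem stmt_10 (N : ℕ) (hN : 4 ≤ N) :
    (∑ i : Fin N, ∑ j ∈ univ.erase i, ∑ k ∈ (univ.erase i).erase j,
        ∑ l ∈ ((univ.erase i).erase j).erase k,
          shiftedRankVal N i * shiftedRankVal N j * shiftedRankVal N k * shiftedRankVal N l)
        / ((N : ℝ) * ((N : ℝ) - 1) * ((N : ℝ) - 2) * ((N : ℝ) - 3))
      = (3 * (N : ℝ) ^ 2 * ((∑ i : Fin N, shiftedRankVal N i ^ 2) / N) ^ 2
          - 6 * (N : ℝ) * ((∑ i : Fin N, shiftedRankVal N i ^ 4) / N))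
        / ((N : ℝ) * ((N : ℝ) - 1) * ((N : ℝ) - 2) * ((N : ℝ) - 3)) :=
  stmt_10_general N
end

section
/- Let Theta be an n x K matrix whose rows are standard basis vectors of R^K (a membership matrix) with each of the K columns containing at least one 1, and let B be a K x K real symmetric invertible matrix. Let U D U^T be an eigendecomposition of Theta B Theta^T restricted to its nonzero eigenvalues, with U n x K having orthonormal columns. Then U = Theta T for some K x K matrix T, and for all k != l, the rows of T satisfy ||T_k - T_l||_2 = sqrt(1/n_k + 1/n_l), where n_k is the number of rows of Theta with membership k. -/
/-!
Since `U = U D Uᵀ U D⁻¹ = Θ (B Θᵀ U D⁻¹)`, the matrix `T := B Θᵀ U D⁻¹` satisfies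
`U = Θ T`. As `Θᵀ Θ = diag(n_k)`, orthonormality of `U` reads
`Tᵀ diag(n_k) T = 1`; for square matrices a left inverse is a right inverse, so
`diag(n_k) T Tᵀ = 1`, i.e. the rows of `T` are orthogonal with `‖T_k‖² = 1 / n_k`.
-/

open Matrix Finset
open scoped Classical

namespace Matrix

variable {ι κ μ ν R : Type*}

def membershipMatrix [Zero R] [One R] [DecidableEq κ] (g : ι → κ) : Matrix ι κ R :=
  of fun i k => if g i = k then 1 else 0

theorem membershipMatrix_transpose_mul_self [Fintype ι] [DecidableEq κ] [NonAssocSemiring R]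
    (g : ι → κ) :
    (membershipMatrix g : Matrix ι κ R)ᵀ * (membershipMatrix g : Matrix ι κ R) =
      diagonal fun k => ((univ.filter fun i => g i = k).card : R) := by
  refine Matrix.ext fun k l => ?_
  simp only [mul_apply, transpose_apply, membershipMatrix, of_apply, ite_mul,
    diagonal_apply]
  split_ifs with hkl
  · subst hkl
    simp +contextual [sum_boole]
  · exact sum_eq_zero fun i _ => by split_ifs <;> simp_all

theorem IsDiag.isUnit_det [Fintype κ] [DecidableEq κ] [Field R] {D : Matrix κ κ R}
    (hD : D.IsDiag) (hD₀ : ∀ k, D k k ≠ 0) : IsUnit D.det := by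
  rw [← hD.diagonal_diag, det_diagonal]
  exact (prod_ne_zero_iff.mpr fun k _ => hD₀ k).isUnit

theorem eq_mul_of_mul_eq_mul_mul_transpose [Fintype κ] [Fintype μ] [Fintype ν] [DecidableEq ν]
    [CommRing R] {A : Matrix μ κ R} {C : Matrix κ μ R} {U : Matrix μ ν R} {D : Matrix ν ν R}
    (hD : IsUnit D.det) (hU : Uᵀ * U = 1) (hdec : A * C = U * D * Uᵀ) :
    U = A * (C * U * D⁻¹) := by
  calc U = U * D * Uᵀ * U * D⁻¹ := by
        rw [Matrix.mul_assoc (U * D), hU, Matrix.mul_one, Matrix.mul_assoc, mul_nonsing_inv _ hD,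
          Matrix.mul_one]
    _ = A * (C * U * D⁻¹) := by rw [← hdec]; simp only [Matrix.mul_assoc]

theorem diagonal_mul_mul_transpose_apply [Fintype κ] [DecidableEq κ] [CommSemiring R]
    (c : κ → R) (T : Matrix κ κ R) (k l : κ) :
    (diagonal c * T * Tᵀ) k l = c k * ∑ m, T k m * T l m := by
  rw [mul_apply, mul_sum]
  simp only [diagonal_mul, transpose_apply, mul_assoc]

theorem sum_sq_sub_rows_eq_of_transpose_mul_diagonal_mul_eq_one [Fintype κ] [DecidableEq κ]
    [Field R] {T : Matrix κ κ R} {c : κ → R} (hT : Tᵀ * diagonal c * T = 1) {k l : κ}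
    (hkl : k ≠ l) :
    ∑ m, (T k m - T l m) ^ 2 = 1 / c k + 1 / c l := by
  have hrows (k l : κ) : c k * ∑ m, T k m * T l m = (1 : Matrix κ κ R) k l := by
    rw [← diagonal_mul_mul_transpose_apply, mul_eq_one_comm.mp (by rwa [← Matrix.mul_assoc])]
  have hnorm (k : κ) : ∑ m, T k m * T k m = 1 / c k :=
    eq_one_div_of_mul_eq_one_right <| by simpa using hrows k k
  have horth : ∑ m, T k m * T l m = 0 := by
    have h := hrows k l
    rw [one_apply_ne hkl] at h
    refine (mul_eq_zero.mp h).resolve_left fun hc => ?_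
    simpa [hc] using hrows k k
  calc ∑ m, (T k m - T l m) ^ 2
      = ∑ m, T k m * T k m - 2 * ∑ m, T k m * T l m + ∑ m, T l m * T l m := by
        rw [mul_sum, ← sum_sub_distrib, ← sum_add_distrib]
        exact sum_congr rfl fun m _ => by ring
    _ = 1 / c k + 1 / c l := by rw [hnorm, hnorm, horth]; ring

end Matrix

theorem stmt_15_general {n K : ℕ} (g : Fin n → Fin K)
    (B : Matrix (Fin K) (Fin K) ℝ)
    (U : Matrix (Fin n) (Fin K) ℝ) (D : Matrix (Fin K) (Fin K) ℝ)
    (hD : D.IsDiag) (hDnz : ∀ k, D k k ≠ 0)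
    (hU : Uᵀ * U = 1)
    (Θ : Matrix (Fin n) (Fin K) ℝ)
    (hΘ : Θ = Matrix.of fun i k => if g i = k then 1 else 0)
    (hdec : Θ * B * Θᵀ = U * D * Uᵀ) :
    ∃ T : Matrix (Fin K) (Fin K) ℝ, U = Θ * T ∧
      ∀ k l, k ≠ l →
        Real.sqrt (∑ m, (T k m - T l m) ^ 2)
          = Real.sqrt (1 / ((Finset.univ.filter fun i => g i = k).card : ℝ)
              + 1 / ((Finset.univ.filter fun i => g i = l).card : ℝ)) := by
  have hΘ' : Θ = membershipMatrix g := hΘ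
  obtain ⟨T, hUT⟩ : ∃ T : Matrix (Fin K) (Fin K) ℝ, U = Θ * T :=
    ⟨_, eq_mul_of_mul_eq_mul_mul_transpose (A := Θ) (C := B * Θᵀ) (hD.isUnit_det hDnz) hU
      (by rw [← Matrix.mul_assoc, hdec])⟩
  have hgram : Tᵀ * diagonal (fun k => ((univ.filter fun i => g i = k).card : ℝ)) * T = 1 := by
    calc _ = Tᵀ * (Θᵀ * Θ) * T := by rw [hΘ', membershipMatrix_transpose_mul_self]
      _ = Uᵀ * U := by rw [hUT, transpose_mul]; simp only [Matrix.mul_assoc]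
      _ = 1 := hU
  refine ⟨T, hUT, fun k l hkl => ?_⟩
  rw [sum_sq_sub_rows_eq_of_transpose_mul_diagonal_mul_eq_one hgram hkl]

/-- Eigen-structure of block matrices: if `Θ` is a membership matrix with every block
nonempty, `B` is a `K × K` symmetric invertible matrix, and `Θ B Θᵀ = U D Uᵀ` with `U`
having orthonormal columns and `D` diagonal with nonzero diagonal entries (the
eigendecomposition restricted to the nonzero eigenvalues), then `U = Θ T` for some
`K × K` matrix `T` whose rows satisfy `‖T_k - T_l‖₂ = sqrt(1/n_k + 1/n_l)` for `k ≠ l`. -/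
theorem stmt_15 {n K : ℕ} (g : Fin n → Fin K) (hsurj : Function.Surjective g)
    (B : Matrix (Fin K) (Fin K) ℝ) (hBsymm : B.IsSymm) (hBinv : IsUnit B)
    (U : Matrix (Fin n) (Fin K) ℝ) (D : Matrix (Fin K) (Fin K) ℝ)
    (hD : D.IsDiag) (hDnz : ∀ k, D k k ≠ 0)
    (hU : Uᵀ * U = 1)
    (Θ : Matrix (Fin n) (Fin K) ℝ)
    (hΘ : Θ = Matrix.of fun i k => if g i = k then 1 else 0)
    (hdec : Θ * B * Θᵀ = U * D * Uᵀ) :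
    ∃ T : Matrix (Fin K) (Fin K) ℝ, U = Θ * T ∧
      ∀ k l, k ≠ l →
        Real.sqrt (∑ m, (T k m - T l m) ^ 2)
          = Real.sqrt (1 / ((Finset.univ.filter fun i => g i = k).card : ℝ)
              + 1 / ((Finset.univ.filter fun i => g i = l).card : ℝ)) :=
  stmt_15_general g B U D hD hDnz hU Θ hΘ hdec
end

section
/- Let Theta be an n x K membership matrix of rank K with block sizes n_1,...,n_K, and let B~ be a K x K symmetric invertible matrix. Then the smallest nonzero singular value gamma of Theta B~ Theta^T satisfies gamma >= n_min * |lambda_K(B~)|, where n_min = min_k n_k and |lambda_K(B~)| is the smallest eigenvalue magnitude of B~. -/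
/-!
If `Θ B~ Θᵀ v = μ v` with `μ ≠ 0`, then `x = Θᵀ v` is nonzero and `(Θᵀ Θ) B~ x = μ x`, where
`Θᵀ Θ = diag(n_1, …, n_K)`. For a Hermitian matrix `A` whose eigenvalues all have modulus at
least `β`, expanding in an orthonormal eigenbasis gives `‖A x‖ ≥ β ‖x‖`. Applied to the diagonal
matrix and to `B~`, this yields `|μ| ‖x‖ = ‖(Θᵀ Θ) B~ x‖ ≥ n_min ‖B~ x‖ ≥ n_min β ‖x‖`.
-/

open Matrix Finset
open scoped Classical InnerProductSpace

namespace LinearMap.IsSymmetric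

variable {𝕜 E : Type*} [RCLike 𝕜] [NormedAddCommGroup E] [InnerProductSpace 𝕜 E]
  [FiniteDimensional 𝕜 E]

theorem mul_norm_le_norm_apply {T : E →ₗ[𝕜] E} (hT : T.IsSymmetric) {β : ℝ}
    (hβ : ∀ μ ∈ spectrum 𝕜 T, β ≤ ‖μ‖) (x : E) : β * ‖x‖ ≤ ‖T x‖ := by
  rcases le_or_gt β 0 with hβ0 | hβ0
  · exact (mul_nonpos_of_nonpos_of_nonneg hβ0 (norm_nonneg x)).trans (norm_nonneg _)
  set b := hT.eigenvectorBasis rfl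
  set eig := hT.eigenvalues rfl
  have hcoeff (i) : ⟪b i, T x⟫_𝕜 = eig i * ⟪b i, x⟫_𝕜 := by
    rw [← hT, hT.apply_eigenvectorBasis, inner_smul_left, RCLike.conj_ofReal]
  suffices (β * ‖x‖) ^ 2 ≤ ‖T x‖ ^ 2 from
    (pow_le_pow_iff_left₀ (by positivity) (norm_nonneg _) two_ne_zero).mp this
  rw [mul_pow, ← b.sum_sq_norm_inner_right, ← b.sum_sq_norm_inner_right, Finset.mul_sum]
  gcongr with i
  rw [hcoeff, norm_mul, mul_pow]
  gcongr
  exact hβ _ (hT.hasEigenvalue_eigenvalues rfl i).mem_spectrum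

end LinearMap.IsSymmetric

namespace Matrix

section Membership

variable {R ι κ : Type*} [Semiring R] [DecidableEq κ]

def membership (g : ι → κ) : Matrix ι κ R :=
  of fun i k => if g i = k then 1 else 0

theorem membership_transpose_mul_self [Fintype ι] (g : ι → κ) :
    (membership g : Matrix ι κ R)ᵀ * (membership g : Matrix ι κ R) =
      diagonal fun k => (#{i | g i = k} : R) := by
  ext k l
  simp only [membership, mul_apply, transpose_apply, of_apply, diagonal_apply,
    ite_zero_mul_ite_zero, mul_one]
  by_cases hkl : k = l
  · simp [hkl, Finset.sum_boole]
  · rw [Finset.sum_eq_zero fun i _ => if_neg fun h => hkl (h.1.symm.trans h.2), if_neg hkl]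

end Membership

theorem exists_mulVec_eq_smul_of_mem_spectrum {K ι : Type*} [Field K] [Fintype ι]
    [DecidableEq ι] {A : Matrix ι ι K} {μ : K} (hμ : μ ∈ spectrum K A) :
    ∃ v ≠ 0, A *ᵥ v = μ • v := by
  rw [← spectrum_toLin', ← Module.End.hasEigenvalue_iff_mem_spectrum] at hμ
  obtain ⟨v, hv_mem, hv_ne⟩ := hμ.exists_hasEigenvector
  exact ⟨v, hv_ne, Module.End.mem_eigenspace_iff.mp hv_mem⟩

theorem mulVec_ne_zero_and_mul_comm_mulVec_eq_smul {R m n : Type*} [CommRing R]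
    [NoZeroDivisors R] [Fintype m] [Fintype n] {A : Matrix m n R} {C : Matrix n m R} {μ : R}
    {v : m → R} (hμ : μ ≠ 0) (hv : v ≠ 0) (h : (A * C) *ᵥ v = μ • v) :
    C *ᵥ v ≠ 0 ∧ (C * A) *ᵥ (C *ᵥ v) = μ • (C *ᵥ v) := by
  refine ⟨fun hCv => smul_ne_zero hμ hv ?_, ?_⟩
  · rw [← h, ← mulVec_mulVec, hCv, mulVec_zero]
  · rw [← mulVec_mulVec, mulVec_mulVec v A C, h, mulVec_smul]

namespace IsHermitian

variable {𝕜 ι : Type*} [RCLike 𝕜] [Fintype ι] [DecidableEq ι]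

theorem mul_norm_le_norm_mulVec {A : Matrix ι ι 𝕜} (hA : A.IsHermitian) {β : ℝ}
    (hβ : ∀ μ ∈ spectrum 𝕜 A, β ≤ ‖μ‖) (x : ι → 𝕜) :
    β * ‖WithLp.toLp 2 x‖ ≤ ‖WithLp.toLp 2 (A *ᵥ x)‖ :=
  (isSymmetric_toEuclideanLin_iff.mpr hA).mul_norm_le_norm_apply
    (by rwa [spectrum_toLpLin]) (WithLp.toLp 2 x)

theorem mul_le_norm_of_mul_mulVec_eq_smul {A B : Matrix ι ι 𝕜}
    (hA : A.IsHermitian) (hB : B.IsHermitian) {α β : ℝ} (hα0 : 0 ≤ α)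
    (hα : ∀ μ ∈ spectrum 𝕜 A, α ≤ ‖μ‖) (hβ : ∀ μ ∈ spectrum 𝕜 B, β ≤ ‖μ‖)
    {μ : 𝕜} {x : ι → 𝕜} (hx : x ≠ 0) (h : (A * B) *ᵥ x = μ • x) : α * β ≤ ‖μ‖ := by
  have hx_pos : 0 < ‖WithLp.toLp 2 x‖ := by simpa using hx
  refine le_of_mul_le_mul_right ?_ hx_pos
  calc α * β * ‖WithLp.toLp 2 x‖ = α * (β * ‖WithLp.toLp 2 x‖) := mul_assoc ..
    _ ≤ α * ‖WithLp.toLp 2 (B *ᵥ x)‖ := by gcongr; exact hB.mul_norm_le_norm_mulVec hβ x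
    _ ≤ ‖WithLp.toLp 2 (A *ᵥ B *ᵥ x)‖ := hA.mul_norm_le_norm_mulVec hα _
    _ = ‖μ‖ * ‖WithLp.toLp 2 x‖ := by rw [mulVec_mulVec, h, WithLp.toLp_smul, norm_smul]

end IsHermitian

end Matrix

theorem stmt_16_general {n K : ℕ} (g : Fin n → Fin K)
    (Btil : Matrix (Fin K) (Fin K) ℝ) (hBsymm : Btil.IsSymm)
    (β : ℝ)
    (hβ : ∀ (μ : ℝ) (v : Fin K → ℝ), v ≠ 0 → Btil.mulVec v = μ • v → β ≤ |μ|)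
    (nmin : ℕ)
    (hnmin : ∀ k, nmin ≤ (Finset.univ.filter fun i => g i = k).card)
    (Θ : Matrix (Fin n) (Fin K) ℝ)
    (hΘ : Θ = Matrix.of fun i k => if g i = k then 1 else 0) :
    ∀ (μ : ℝ) (v : Fin n → ℝ), μ ≠ 0 → v ≠ 0 →
      (Θ * Btil * Θᵀ).mulVec v = μ • v → (nmin : ℝ) * β ≤ |μ| := by
  obtain rfl : Θ = membership g := hΘ
  intro μ v hμ hv hev
  obtain ⟨hx, hDBx⟩ := mulVec_ne_zero_and_mul_comm_mulVec_eq_smul (A := _ * Btil) hμ hv hev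
  rw [← Matrix.mul_assoc, membership_transpose_mul_self] at hDBx
  have hD : ∀ μ ∈ spectrum ℝ (diagonal fun k => (#{i | g i = k} : ℝ)), (nmin : ℝ) ≤ ‖μ‖ := by
    simpa using hnmin
  have hB : ∀ μ ∈ spectrum ℝ Btil, β ≤ ‖μ‖ := fun μ hμ => by
    obtain ⟨v, hv, h⟩ := exists_mulVec_eq_smul_of_mem_spectrum hμ
    exact hβ μ v hv h
  simpa using (isHermitian_diagonal _).mul_le_norm_of_mul_mulVec_eq_smul
    (isHermitian_iff_isSymm.mpr hBsymm) (Nat.cast_nonneg nmin) hD hB hx hDBx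

/-- Let `Θ` be an `n × K` membership matrix of rank `K` (membership map `g` surjective)
and `B~` a `K × K` symmetric invertible matrix.  If `β` is the smallest eigenvalue
magnitude of `B~` (formalized: `β` is a lower bound on `|μ|` over all eigenvalues `μ` of
`B~`) and `n_min` is a lower bound on all block sizes, then every nonzero singular value
of the symmetric matrix `Θ B~ Θᵀ` (equivalently, the magnitude `|μ|` of any nonzero
eigenvalue `μ`) is at least `n_min · β`; in particular the smallest nonzero singular
value `γ` satisfies `γ ≥ n_min · |λ_K(B~)|`. -/
theorem stmt_16 {n K : ℕ} (g : Fin n → Fin K) (hsurj : Function.Surjective g)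
    (Btil : Matrix (Fin K) (Fin K) ℝ) (hBsymm : Btil.IsSymm) (hBinv : IsUnit Btil)
    (β : ℝ)
    (hβ : ∀ (μ : ℝ) (v : Fin K → ℝ), v ≠ 0 → Btil.mulVec v = μ • v → β ≤ |μ|)
    (nmin : ℕ)
    (hnmin : ∀ k, nmin ≤ (Finset.univ.filter fun i => g i = k).card)
    (Θ : Matrix (Fin n) (Fin K) ℝ)
    (hΘ : Θ = Matrix.of fun i k => if g i = k then 1 else 0) :
    ∀ (μ : ℝ) (v : Fin n → ℝ), μ ≠ 0 → v ≠ 0 →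
      (Θ * Btil * Θᵀ).mulVec v = μ • v → (nmin : ℝ) * β ≤ |μ| :=
  stmt_16_general g Btil hBsymm β hβ nmin hnmin Θ hΘ
end
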